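/- arXiv:1609.00232 — 4 statements merged into one kernel-verified Lean document; each statement's English description precedes it below -/
import Mathlib

section
/- Let f be four times continuously differentiable on an interval containing x_{i−1} < x_i < x_{i+1} with Δx_i = x_i−x_{i−1}, Δx_{i+1} = x_{i+1}−x_i. Then the error of the central second-derivative approximation satisfies |δ_{i,−1}f(x_{i−1}) + δ_{i,0}f(x_i) + δ_{i,1}f(x_{i+1}) − f''(x_i)| ≤ (1/3)|Δx_{i+1} − Δx_i|·sup|f'''| + (1/12)(Δx_i² + Δx_{i+1}²)·sup|f⁗|; in particular, on a smooth mesh with |Δx_{i+1} − Δx_i| ≤ C₂(Δξ)² and Δx_i, Δx_{i+1} ≤ C₁Δξ, the truncation error is O((Δξ)²). -/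
/-!
Expand `f(x_{i±1})` to third order about `x_i` by Taylor's theorem with Lagrange remainder.
The weights `δ` annihilate the constant and linear terms, reproduce `f''(x_i)` from the quadratic
ones and leave `(Δx_{i+1} - Δx_i) / 3 · f'''(x_i)` from the cubic ones; each fourth-order
remainder, at most `M₄ Δx⁴ / 24`, is multiplied by a weight of size at most `2 / Δx²`.
-/

open Set Finset Nat

theorem abs_sub_taylor_le_of_abs_iteratedDeriv_le {f : ℝ → ℝ} {n : ℕ}
    (hf : ContDiff ℝ (n + 1) f) {x₀ x M : ℝ}
    (hM : ∀ y ∈ uIcc x₀ x, |iteratedDeriv (n + 1) f y| ≤ M) :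
    |f x - ∑ k ∈ range (n + 1), iteratedDeriv k f x₀ * (x - x₀) ^ k / k !|
      ≤ M * |x - x₀| ^ (n + 1) / (n + 1)! := by
  rcases eq_or_ne x₀ x with rfl | hx
  · simp [sum_range_succ']
  obtain ⟨y, hy, hrem⟩ := taylor_mean_remainder_lagrange_iteratedDeriv hx hf.contDiffOn
  have htaylor : taylorWithinEval f n (uIcc x₀ x) x₀ x
      = ∑ k ∈ range (n + 1), iteratedDeriv k f x₀ * (x - x₀) ^ k / k ! := by
    rw [taylor_within_apply]
    refine sum_congr rfl fun k hk => ?_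
    have hkn : k ≤ n + 1 := by have := mem_range.1 hk; omega
    rw [iteratedDerivWithin_eq_iteratedDeriv (uniqueDiffOn_uIcc hx)
      (hf.contDiffAt.of_le (by exact_mod_cast hkn)) left_mem_uIcc, smul_eq_mul]
    ring
  rw [← htaylor, hrem, abs_div, abs_mul, abs_pow, Nat.abs_cast]
  gcongr
  exact hM y (uIoo_subset_uIcc_self hy)

theorem abs_sub_cubic_taylor_le {f : ℝ → ℝ} (hf : ContDiff ℝ 4 f) {x₀ x M : ℝ}
    (hM : ∀ y ∈ uIcc x₀ x, |iteratedDeriv 4 f y| ≤ M) :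
    |f x - (f x₀ + deriv f x₀ * (x - x₀) + iteratedDeriv 2 f x₀ * (x - x₀) ^ 2 / 2
      + iteratedDeriv 3 f x₀ * (x - x₀) ^ 3 / 6)| ≤ M * (x - x₀) ^ 4 / 24 := by
  have := abs_sub_taylor_le_of_abs_iteratedDeriv_le (n := 3) hf hM
  simp only [sum_range_succ, sum_range_zero, iteratedDeriv_zero, iteratedDeriv_one,
    Nat.factorial] at this
  norm_num at this
  rwa [(by decide : Even 4).pow_abs] at this

/-- `δ_{i,-1} um + δ_{i,0} u0 + δ_{i,1} up` for the spacings `a = Δx_i`, `b = Δx_{i+1}`. -/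
noncomputable def centralSecondDiff (a b um u0 up : ℝ) : ℝ :=
  2 / (a * (a + b)) * um + -2 / (a * b) * u0 + 2 / (b * (a + b)) * up

theorem centralSecondDiff_sub_eq {a b : ℝ} (ha : 0 < a) (hb : 0 < b)
    (um u0 up d1 d2 d3 : ℝ) :
    centralSecondDiff a b um u0 up - d2
      = (b - a) / 3 * d3
        + 2 / (a * (a + b)) * (um - (u0 - d1 * a + d2 * a ^ 2 / 2 - d3 * a ^ 3 / 6))
        + 2 / (b * (a + b)) * (up - (u0 + d1 * b + d2 * b ^ 2 / 2 + d3 * b ^ 3 / 6)) := by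
  unfold centralSecondDiff
  field_simp
  ring

theorem abs_two_div_mul_le {h h' r M : ℝ} (hh : 0 < h) (hh' : 0 < h')
    (hr : |r| ≤ M * h ^ 4 / 24) :
    |2 / (h * (h + h')) * r| ≤ 1 / 12 * h ^ 2 * M := by
  have hM : 0 ≤ M := by nlinarith [(abs_nonneg r).trans hr, pow_pos hh 4]
  rw [abs_mul, abs_of_pos (by positivity)]
  calc 2 / (h * (h + h')) * |r| ≤ 2 / (h * (h + h')) * (M * h ^ 4 / 24) := by gcongr
    _ = 1 / 12 * h ^ 2 * M * (h / (h + h')) := by field_simp; ring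
    _ ≤ 1 / 12 * h ^ 2 * M * 1 := by gcongr; rw [div_le_one (by positivity)]; linarith
    _ = 1 / 12 * h ^ 2 * M := mul_one _

theorem abs_centralSecondDiff_sub_le {a b : ℝ} (ha : 0 < a) (hb : 0 < b)
    {um u0 up d1 d2 d3 M3 M4 : ℝ} (hd3 : |d3| ≤ M3)
    (hum : |um - (u0 - d1 * a + d2 * a ^ 2 / 2 - d3 * a ^ 3 / 6)| ≤ M4 * a ^ 4 / 24)
    (hup : |up - (u0 + d1 * b + d2 * b ^ 2 / 2 + d3 * b ^ 3 / 6)| ≤ M4 * b ^ 4 / 24) :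
    |centralSecondDiff a b um u0 up - d2|
      ≤ 1 / 3 * |b - a| * M3 + 1 / 12 * (a ^ 2 + b ^ 2) * M4 := by
  rw [centralSecondDiff_sub_eq ha hb um u0 up d1 d2 d3]
  have hcubic : |(b - a) / 3 * d3| ≤ 1 / 3 * |b - a| * M3 := by
    rw [abs_mul, abs_div, abs_of_pos (three_pos : (0 : ℝ) < 3)]
    linarith [mul_le_mul_of_nonneg_left hd3 (abs_nonneg (b - a))]
  have hleft := abs_two_div_mul_le ha hb hum
  have hright := abs_two_div_mul_le hb ha hup
  rw [add_comm b a] at hright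
  linarith [abs_add_three ((b - a) / 3 * d3)
    (2 / (a * (a + b)) * (um - (u0 - d1 * a + d2 * a ^ 2 / 2 - d3 * a ^ 3 / 6)))
    (2 / (b * (a + b)) * (up - (u0 + d1 * b + d2 * b ^ 2 / 2 + d3 * b ^ 3 / 6)))]

/-- truncation error bound for the non-uniform central
second-derivative formula. -/
theorem stmt7 (xm xi xp : ℝ) (h1 : xm < xi) (h2 : xi < xp)
    (f : ℝ → ℝ) (hf : ContDiff ℝ 4 f) (M3 M4 : ℝ)
    (h3 : ∀ x ∈ Set.Icc xm xp, |iteratedDeriv 3 f x| ≤ M3)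
    (h4 : ∀ x ∈ Set.Icc xm xp, |iteratedDeriv 4 f x| ≤ M4) :
    let Δi := xi - xm
    let Δip := xp - xi
    |(2 / (Δi * (Δi + Δip))) * f xm + (-2 / (Δi * Δip)) * f xi
        + (2 / (Δip * (Δi + Δip))) * f xp - deriv (deriv f) xi|
      ≤ (1 / 3) * |Δip - Δi| * M3 + (1 / 12) * (Δi ^ 2 + Δip ^ 2) * M4 := by
  intro Δi Δip
  have hm := abs_sub_cubic_taylor_le hf (x₀ := xi) (x := xm) fun y hy =>
    h4 y (Icc_subset_Icc le_rfl h2.le (uIcc_of_ge h1.le ▸ hy))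
  have hp := abs_sub_cubic_taylor_le hf (x₀ := xi) (x := xp) fun y hy =>
    h4 y (Icc_subset_Icc h1.le le_rfl (uIcc_of_le h2.le ▸ hy))
  show |centralSecondDiff Δi Δip (f xm) (f xi) (f xp) - _| ≤ _
  rw [show deriv (deriv f) = iteratedDeriv 2 f by simp only [iteratedDeriv_succ, iteratedDeriv_zero]]
  refine abs_centralSecondDiff_sub_le (sub_pos.2 h1) (sub_pos.2 h2) (d1 := deriv f xi)
    (h3 xi ⟨h1.le, h2.le⟩) ?_ hp
  convert hm using 3 <;> ring
end

section
/- Suppose the finite difference matrices satisfy D_x e_x = 0, D_{xx} e_x = 0, D_v e_v = 0, D_{vv} e_v = 0, where e_x ∈ ℝ^{m₁}, e_v ∈ ℝ^{m₂} are the all-ones vectors. Let the matrix-valued function P̄ : [0,∞) → M_{m₁×m₂}(ℝ) satisfy the forward system P̄'(τ) = ½ D_{xx}ᵀ L²(τ) P̄(τ) ψ²(Λ) + ρξ D_xᵀ L(τ) P̄(τ) ψ(Λ)Λ^α D_v + ½ξ² P̄(τ) Λ^{2α} D_{vv} + (r_d−r_f) D_xᵀ P̄(τ) − ½ D_xᵀ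 L²(τ) P̄(τ) ψ²(Λ) + P̄(τ) κ(ηI_v − Λ) D_v. Then e_xᵀ P̄'(τ) e_v = 0 for all τ, and consequently e_xᵀ P̄(τ) e_v = e_xᵀ P̄(0) e_v for all τ ≥ 0 (conservation of total probability mass). -/
/-!
Zero row sums of `D_x, D_xx` make `e_xᵀ D_xᵀ = 0` and `e_xᵀ D_xxᵀ = 0`, which kills the terms of the
forward system whose leftmost factor is `D_xᵀ` or `D_xxᵀ`; zero row sums of `D_v, D_vv` kill those
whose rightmost factor is `D_v` or `D_vv`. Every term is of one of these kinds, so the total mass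
`e_xᵀ P̄ e_v` has zero derivative and is constant.
-/

open Matrix

namespace Matrix

variable {l m n R : Type*} [Fintype m] [CommSemiring R]

theorem vecMul_mul_eq_zero [Fintype l] {x : l → R} {M : Matrix l m R} (h : x ᵥ* M = 0)
    (N : Matrix m n R) : x ᵥ* (M * N) = 0 := by
  rw [← vecMul_vecMul, h, zero_vecMul]

theorem mul_mulVec_eq_zero [Fintype n] {N : Matrix m n R} {v : n → R} (h : N *ᵥ v = 0)
    (M : Matrix l m R) : (M * N) *ᵥ v = 0 := by
  rw [← mulVec_mulVec, h, mulVec_zero]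

theorem dotProduct_mulVec_eq_zero_of_vecMul_eq_zero [Fintype n] {x : m → R} {M : Matrix m n R}
    (h : x ᵥ* M = 0) (v : n → R) : x ⬝ᵥ (M *ᵥ v) = 0 := by
  rw [dotProduct_mulVec, h, zero_dotProduct]

theorem hasDerivAt_dotProduct_mulVec [Fintype n] {P P' : ℝ → Matrix m n ℝ} {τ : ℝ}
    (hP : ∀ i j, HasDerivAt (fun τ => P τ i j) (P' τ i j) τ) (x : m → ℝ) (v : n → ℝ) :
    HasDerivAt (fun τ => x ⬝ᵥ (P τ *ᵥ v)) (x ⬝ᵥ (P' τ *ᵥ v)) τ := by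
  simp only [dotProduct, mulVec]
  exact HasDerivAt.fun_sum fun i _ =>
    (HasDerivAt.fun_sum fun j _ => (hP i j).mul_const (v j)).const_mul (x i)

theorem dotProduct_mulVec_eq_of_hasDerivAt [Fintype n] {P P' : ℝ → Matrix m n ℝ}
    (hP : ∀ τ, ∀ i j, HasDerivAt (fun τ => P τ i j) (P' τ i j) τ) {x : m → ℝ} {v : n → ℝ}
    (h : ∀ τ, x ⬝ᵥ (P' τ *ᵥ v) = 0) (s t : ℝ) :
    x ⬝ᵥ (P s *ᵥ v) = x ⬝ᵥ (P t *ᵥ v) :=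
  is_const_of_deriv_eq_zero (fun τ => (hasDerivAt_dotProduct_mulVec (hP τ) x v).differentiableAt)
    (fun τ => (hasDerivAt_dotProduct_mulVec (hP τ) x v).deriv.trans (h τ)) s t

end Matrix

theorem stmt8_general {m₁ m₂ : ℕ}
    (Dx Dxx : Matrix (Fin m₁) (Fin m₁) ℝ) (Dv Dvv : Matrix (Fin m₂) (Fin m₂) ℝ)
    (ex : Fin m₁ → ℝ) (ev : Fin m₂ → ℝ)
    (hDx : Dx *ᵥ ex = 0) (hDxx : Dxx *ᵥ ex = 0)
    (hDv : Dv *ᵥ ev = 0) (hDvv : Dvv *ᵥ ev = 0)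
    (ρ ξ κ η rd rf : ℝ)
    (L : ℝ → Matrix (Fin m₁) (Fin m₁) ℝ)
    (Λ Ψ Ψ2 Λα Λ2α : Matrix (Fin m₂) (Fin m₂) ℝ)
    (P : ℝ → Matrix (Fin m₁) (Fin m₂) ℝ)
    (P' : ℝ → Matrix (Fin m₁) (Fin m₂) ℝ)
    (hderiv : ∀ τ, ∀ i j, HasDerivAt (fun τ => P τ i j) (P' τ i j) τ)
    (hODE : ∀ τ, P' τ =
        (1 / 2 : ℝ) • (Dxxᵀ * (L τ * L τ) * P τ * Ψ2)
      + (ρ * ξ) • (Dxᵀ * L τ * P τ * (Ψ * Λα * Dv))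
      + (ξ ^ 2 / 2) • (P τ * Λ2α * Dvv)
      + (rd - rf) • (Dxᵀ * P τ)
      - (1 / 2 : ℝ) • (Dxᵀ * (L τ * L τ) * P τ * Ψ2)
      + κ • (P τ * (η • (1 : Matrix (Fin m₂) (Fin m₂) ℝ) - Λ) * Dv)) :
    (∀ τ, ex ⬝ᵥ (P' τ *ᵥ ev) = 0) ∧
    (∀ τ, 0 ≤ τ → ex ⬝ᵥ (P τ *ᵥ ev) = ex ⬝ᵥ (P 0 *ᵥ ev)) := by
  have hx : ex ᵥ* Dxᵀ = 0 := by rw [vecMul_transpose, hDx]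
  have hxx : ex ᵥ* Dxxᵀ = 0 := by rw [vecMul_transpose, hDxx]
  have hmass : ∀ τ, ex ⬝ᵥ (P' τ *ᵥ ev) = 0 := by
    intro τ
    simp only [hODE τ, add_mulVec, sub_mulVec, smul_mulVec, dotProduct_add, dotProduct_sub,
      dotProduct_smul,
      dotProduct_mulVec_eq_zero_of_vecMul_eq_zero
        (vecMul_mul_eq_zero (vecMul_mul_eq_zero (vecMul_mul_eq_zero hxx _) _) _),
      dotProduct_mulVec_eq_zero_of_vecMul_eq_zero
        (vecMul_mul_eq_zero (vecMul_mul_eq_zero (vecMul_mul_eq_zero hx _) _) _),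
      dotProduct_mulVec_eq_zero_of_vecMul_eq_zero (vecMul_mul_eq_zero hx _),
      mul_mulVec_eq_zero (mul_mulVec_eq_zero hDv _), mul_mulVec_eq_zero hDv,
      mul_mulVec_eq_zero hDvv, smul_zero, add_zero, sub_zero]
  exact ⟨hmass, fun τ _ => dotProduct_mulVec_eq_of_hasDerivAt hderiv hmass τ 0⟩

/-- conservation of total probability mass for the adjoint forward
SLV semidiscretization, given zero row sums of the finite difference matrices. -/
theorem stmt8 {m₁ m₂ : ℕ}
    (Dx Dxx : Matrix (Fin m₁) (Fin m₁) ℝ) (Dv Dvv : Matrix (Fin m₂) (Fin m₂) ℝ)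
    (ex : Fin m₁ → ℝ) (ev : Fin m₂ → ℝ)
    (hex : ex = fun _ => 1) (hev : ev = fun _ => 1)
    (hDx : Dx *ᵥ ex = 0) (hDxx : Dxx *ᵥ ex = 0)
    (hDv : Dv *ᵥ ev = 0) (hDvv : Dvv *ᵥ ev = 0)
    (ρ ξ κ η rd rf : ℝ)
    (L : ℝ → Matrix (Fin m₁) (Fin m₁) ℝ)
    (Λ Ψ Ψ2 Λα Λ2α : Matrix (Fin m₂) (Fin m₂) ℝ)
    (P : ℝ → Matrix (Fin m₁) (Fin m₂) ℝ)
    (P' : ℝ → Matrix (Fin m₁) (Fin m₂) ℝ)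
    (hderiv : ∀ τ, ∀ i j, HasDerivAt (fun τ => P τ i j) (P' τ i j) τ)
    (hODE : ∀ τ, P' τ =
        (1 / 2 : ℝ) • (Dxxᵀ * (L τ * L τ) * P τ * Ψ2)
      + (ρ * ξ) • (Dxᵀ * L τ * P τ * (Ψ * Λα * Dv))
      + (ξ ^ 2 / 2) • (P τ * Λ2α * Dvv)
      + (rd - rf) • (Dxᵀ * P τ)
      - (1 / 2 : ℝ) • (Dxᵀ * (L τ * L τ) * P τ * Ψ2)
      + κ • (P τ * (η • (1 : Matrix (Fin m₂) (Fin m₂) ℝ) - Λ) * Dv)) :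
    (∀ τ, ex ⬝ᵥ (P' τ *ᵥ ev) = 0) ∧
    (∀ τ, 0 ≤ τ → ex ⬝ᵥ (P τ *ᵥ ev) = ex ⬝ᵥ (P 0 *ᵥ ev)) :=
  stmt8_general Dx Dxx Dv Dvv ex ev hDx hDxx hDv hDvv ρ ξ κ η rd rf L Λ Ψ Ψ2 Λα Λ2α P P' hderiv hODE
end

section
/- Under the same assumptions D_x e_x = 0, D_{xx} e_x = 0, D_v e_v = 0, D_{vv} e_v = 0, the marginal vector q(τ) := P̄(τ) e_v of the forward SLV system satisfies the one-dimensional ODE q'(τ) = ½ D_{xx}ᵀ L²(τ) W(τ) + (r_d − r_f) D_xᵀ q(τ) − ½ D_xᵀ L²(τ) W(τ), where W(τ) := P̄(τ) ψ²(Λ) e_v. -/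
open Matrix

/-! Right multiplication by `e_v` is a fixed linear map, so it commutes with `d/dτ`; applied to
the matrix ODE it annihilates every term ending in `Dv` or `Dvv`, since these annihilate `e_v`. -/

theorem Matrix.hasDerivAt_mulVec_const {𝕜 m n : Type*} [NontriviallyNormedField 𝕜] [Fintype n]
    {A : 𝕜 → Matrix m n 𝕜} {A' : Matrix m n 𝕜} {t : 𝕜}
    (hA : ∀ i j, HasDerivAt (fun t => A t i j) (A' i j) t) (v : n → 𝕜) :
    HasDerivAt (fun t => A t *ᵥ v) (A' *ᵥ v) t := by
  rw [hasDerivAt_pi]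
  intro i
  simpa only [mulVec, dotProduct] using
    HasDerivAt.fun_sum fun j (_ : j ∈ Finset.univ) => (hA i j).mul_const (v j)

theorem stmt9_general {m₁ m₂ : ℕ}
    (Dx Dxx : Matrix (Fin m₁) (Fin m₁) ℝ) (Dv Dvv : Matrix (Fin m₂) (Fin m₂) ℝ)
    (ev : Fin m₂ → ℝ)
    (hDv : Dv *ᵥ ev = 0) (hDvv : Dvv *ᵥ ev = 0)
    (ρ ξ κ η rd rf : ℝ)
    (L : ℝ → Matrix (Fin m₁) (Fin m₁) ℝ)
    (Λ Ψ Ψ2 Λα Λ2α : Matrix (Fin m₂) (Fin m₂) ℝ)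
    (P : ℝ → Matrix (Fin m₁) (Fin m₂) ℝ)
    (P' : ℝ → Matrix (Fin m₁) (Fin m₂) ℝ)
    (hderiv : ∀ τ, ∀ i j, HasDerivAt (fun τ => P τ i j) (P' τ i j) τ)
    (hODE : ∀ τ, P' τ =
        (1 / 2 : ℝ) • (Dxxᵀ * (L τ * L τ) * P τ * Ψ2)
      + (ρ * ξ) • (Dxᵀ * L τ * P τ * (Ψ * Λα * Dv))
      + (ξ ^ 2 / 2) • (P τ * Λ2α * Dvv)
      + (rd - rf) • (Dxᵀ * P τ)
      - (1 / 2 : ℝ) • (Dxᵀ * (L τ * L τ) * P τ * Ψ2)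
      + κ • (P τ * (η • (1 : Matrix (Fin m₂) (Fin m₂) ℝ) - Λ) * Dv)) :
    ∀ τ, HasDerivAt (fun τ => P τ *ᵥ ev)
      ((1 / 2 : ℝ) • ((Dxxᵀ * (L τ * L τ)) *ᵥ ((P τ * Ψ2) *ᵥ ev))
        + (rd - rf) • (Dxᵀ *ᵥ (P τ *ᵥ ev))
        - (1 / 2 : ℝ) • ((Dxᵀ * (L τ * L τ)) *ᵥ ((P τ * Ψ2) *ᵥ ev))) τ := by
  intro τ
  have marginal_drift : P' τ *ᵥ ev =
      (1 / 2 : ℝ) • ((Dxxᵀ * (L τ * L τ)) *ᵥ ((P τ * Ψ2) *ᵥ ev))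
        + (rd - rf) • (Dxᵀ *ᵥ (P τ *ᵥ ev))
        - (1 / 2 : ℝ) • ((Dxᵀ * (L τ * L τ)) *ᵥ ((P τ * Ψ2) *ᵥ ev)) := by
    rw [hODE τ]
    simp only [add_mulVec, sub_mulVec, smul_mulVec, ← mulVec_mulVec, hDv, hDvv, mulVec_zero,
      smul_zero, add_zero]
  exact marginal_drift ▸ hasDerivAt_mulVec_const (hderiv τ) ev

/-- the marginal vector `q(τ) = P̄(τ) e_v` of the forward SLV system
satisfies the one-dimensional ODE
`q' = ½ Dxxᵀ L² W + (r_d - r_f) Dxᵀ q - ½ Dxᵀ L² W` with `W = P̄ ψ²(Λ) e_v`. -/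
theorem stmt9 {m₁ m₂ : ℕ}
    (Dx Dxx : Matrix (Fin m₁) (Fin m₁) ℝ) (Dv Dvv : Matrix (Fin m₂) (Fin m₂) ℝ)
    (ex : Fin m₁ → ℝ) (ev : Fin m₂ → ℝ)
    (hex : ex = fun _ => 1) (hev : ev = fun _ => 1)
    (hDx : Dx *ᵥ ex = 0) (hDxx : Dxx *ᵥ ex = 0)
    (hDv : Dv *ᵥ ev = 0) (hDvv : Dvv *ᵥ ev = 0)
    (ρ ξ κ η rd rf : ℝ)
    (L : ℝ → Matrix (Fin m₁) (Fin m₁) ℝ)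
    (Λ Ψ Ψ2 Λα Λ2α : Matrix (Fin m₂) (Fin m₂) ℝ)
    (P : ℝ → Matrix (Fin m₁) (Fin m₂) ℝ)
    (P' : ℝ → Matrix (Fin m₁) (Fin m₂) ℝ)
    (hderiv : ∀ τ, ∀ i j, HasDerivAt (fun τ => P τ i j) (P' τ i j) τ)
    (hODE : ∀ τ, P' τ =
        (1 / 2 : ℝ) • (Dxxᵀ * (L τ * L τ) * P τ * Ψ2)
      + (ρ * ξ) • (Dxᵀ * L τ * P τ * (Ψ * Λα * Dv))
      + (ξ ^ 2 / 2) • (P τ * Λ2α * Dvv)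
      + (rd - rf) • (Dxᵀ * P τ)
      - (1 / 2 : ℝ) • (Dxᵀ * (L τ * L τ) * P τ * Ψ2)
      + κ • (P τ * (η • (1 : Matrix (Fin m₂) (Fin m₂) ℝ) - Λ) * Dv)) :
    ∀ τ, HasDerivAt (fun τ => P τ *ᵥ ev)
      ((1 / 2 : ℝ) • ((Dxxᵀ * (L τ * L τ)) *ᵥ ((P τ * Ψ2) *ᵥ ev))
        + (rd - rf) • (Dxᵀ *ᵥ (P τ *ᵥ ev))
        - (1 / 2 : ℝ) • ((Dxᵀ * (L τ * L τ)) *ᵥ ((P τ * Ψ2) *ᵥ ev))) τ :=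
  stmt9_general Dx Dxx Dv Dvv ev hDv hDvv ρ ξ κ η rd rf L Λ Ψ Ψ2 Λα Λ2α P P' hderiv hODE
end

section
/- Under the hypotheses of the previous statement (exact semidiscrete calibration P̄(τ)e_v = P̄_{LV}(τ) for all τ), if U solves the backward SLV system U'(t) = A^{(B)}(t)U(t) with U(0) = u₀ ⊗-replicated so that U_{(i,j)}(0) = U_{LV,i}(0) for all j, and U_{LV} solves the backward LV system U_{LV}'(t) = A^{(B)}_{LV}(t)U_{LV}(t), then the spot values coincide: U_{LV,i₀}(T) = P̄_{LV}(T)ᵀ U_{LV}(0) = P̄(T)ᵀ U(0) = U_{k₀}(T), where k₀ is the index corresponding to (i₀, j₀). -/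
open Matrix

theorem HasDerivAt.dotProduct {𝕜 ι : Type*} [NontriviallyNormedField 𝕜] [Fintype ι]
    {p u : 𝕜 → ι → 𝕜} {p' u' : ι → 𝕜} {t : 𝕜} (hp : HasDerivAt p p' t) (hu : HasDerivAt u u' t) :
    HasDerivAt (fun s => p s ⬝ᵥ u s) (p' ⬝ᵥ u t + p t ⬝ᵥ u') t := by
  simp only [_root_.dotProduct, ← Finset.sum_add_distrib]
  exact HasDerivAt.fun_sum fun k _ =>
    (hasDerivAt_pi.mp hp k).mul (hasDerivAt_pi.mp hu k)

/-- `τ ↦ p τ ⬝ᵥ u (T - τ)` is constant because `(Aᵀ p) ⬝ᵥ u = p ⬝ᵥ A u`. -/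
theorem dotProduct_eq_of_hasDerivAt_transpose {ι : Type*} [Fintype ι] (T : ℝ)
    (A : ℝ → Matrix ι ι ℝ) (u p : ℝ → ι → ℝ)
    (hu : ∀ t, HasDerivAt u (A t *ᵥ u t) t)
    (hp : ∀ τ, HasDerivAt p ((A (T - τ))ᵀ *ᵥ p τ) τ) :
    p T ⬝ᵥ u 0 = p 0 ⬝ᵥ u T := by
  have hderiv : ∀ τ, HasDerivAt (fun τ => p τ ⬝ᵥ u (T - τ)) 0 τ := fun τ => by
    have hu' : HasDerivAt (fun τ => u (T - τ)) (-(A (T - τ) *ᵥ u (T - τ))) τ := by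
      simpa [Function.comp_def] using (hu (T - τ)).scomp τ ((hasDerivAt_id τ).const_sub T)
    have h := (hp τ).dotProduct hu'
    rwa [mulVec_transpose, dotProduct_neg, ← dotProduct_mulVec, add_neg_cancel] at h
  simpa using is_const_of_deriv_eq_zero (fun τ => (hderiv τ).differentiableAt)
    (fun τ => (hderiv τ).deriv) T 0

theorem dotProduct_eq_of_sum_snd_eq {R ι κ : Type*} [NonUnitalNonAssocSemiring R]
    [Fintype ι] [Fintype κ] {p : ι × κ → R} {q : ι → R} {U : ι × κ → R} {u : ι → R}
    (hpq : (fun i => ∑ j, p (i, j)) = q) (hUu : ∀ i j, U (i, j) = u i) :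
    q ⬝ᵥ u = p ⬝ᵥ U := by
  subst hpq
  simp only [dotProduct, Fintype.sum_prod_type, hUu, Finset.sum_mul]

theorem stmt11_general {m₁ m₂ : ℕ} (T : ℝ)
    (A : ℝ → Matrix (Fin m₁ × Fin m₂) (Fin m₁ × Fin m₂) ℝ)
    (ALV : ℝ → Matrix (Fin m₁) (Fin m₁) ℝ)
    (U : ℝ → (Fin m₁ × Fin m₂ → ℝ)) (ULV : ℝ → (Fin m₁ → ℝ))
    (P : ℝ → (Fin m₁ × Fin m₂ → ℝ)) (PLV : ℝ → (Fin m₁ → ℝ))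
    (i₀ : Fin m₁) (j₀ : Fin m₂)
    -- backward systems
    (hU : ∀ t, HasDerivAt U (A t *ᵥ U t) t)
    (hULV : ∀ t, HasDerivAt ULV (ALV t *ᵥ ULV t) t)
    -- adjoint forward systems
    (hP : ∀ τ, HasDerivAt P ((A (T - τ))ᵀ *ᵥ P τ) τ)
    (hPLV : ∀ τ, HasDerivAt PLV ((ALV (T - τ))ᵀ *ᵥ PLV τ) τ)
    -- initial conditions for the adjoint forward systems
    (hP0 : P 0 = Pi.single (i₀, j₀) 1)
    (hPLV0 : PLV 0 = Pi.single i₀ 1)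
    -- the payoff depends only on the exchange rate
    (hpayoff : ∀ i j, U 0 (i, j) = ULV 0 i)
    -- exact semidiscrete calibration of the marginals
    (hcal : ∀ τ, (fun i => ∑ j, P τ (i, j)) = PLV τ) :
    ULV T i₀ = PLV T ⬝ᵥ ULV 0 ∧
    PLV T ⬝ᵥ ULV 0 = P T ⬝ᵥ U 0 ∧
    P T ⬝ᵥ U 0 = U T (i₀, j₀) := by
  refine ⟨?_, dotProduct_eq_of_sum_snd_eq (hcal T) hpayoff, ?_⟩
  · rw [dotProduct_eq_of_hasDerivAt_transpose T ALV ULV PLV hULV hPLV, hPLV0,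
      single_one_dotProduct]
  · rw [dotProduct_eq_of_hasDerivAt_transpose T A U P hU hP, hP0, single_one_dotProduct]

/-- under exact semidiscrete calibration, the approximated fair
values of non-path-dependent European options under the semidiscrete LV and SLV
models coincide at the spot. -/
theorem stmt11 {m₁ m₂ : ℕ} (T : ℝ) (hT : 0 ≤ T)
    (A : ℝ → Matrix (Fin m₁ × Fin m₂) (Fin m₁ × Fin m₂) ℝ)
    (ALV : ℝ → Matrix (Fin m₁) (Fin m₁) ℝ)
    (U : ℝ → (Fin m₁ × Fin m₂ → ℝ)) (ULV : ℝ → (Fin m₁ → ℝ))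
    (P : ℝ → (Fin m₁ × Fin m₂ → ℝ)) (PLV : ℝ → (Fin m₁ → ℝ))
    (i₀ : Fin m₁) (j₀ : Fin m₂)
    -- backward systems
    (hU : ∀ t, HasDerivAt U (A t *ᵥ U t) t)
    (hULV : ∀ t, HasDerivAt ULV (ALV t *ᵥ ULV t) t)
    -- adjoint forward systems
    (hP : ∀ τ, HasDerivAt P ((A (T - τ))ᵀ *ᵥ P τ) τ)
    (hPLV : ∀ τ, HasDerivAt PLV ((ALV (T - τ))ᵀ *ᵥ PLV τ) τ)
    -- initial conditions for the adjoint forward systems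
    (hP0 : P 0 = Pi.single (i₀, j₀) 1)
    (hPLV0 : PLV 0 = Pi.single i₀ 1)
    -- the payoff depends only on the exchange rate
    (hpayoff : ∀ i j, U 0 (i, j) = ULV 0 i)
    -- exact semidiscrete calibration of the marginals
    (hcal : ∀ τ, (fun i => ∑ j, P τ (i, j)) = PLV τ) :
    ULV T i₀ = PLV T ⬝ᵥ ULV 0 ∧
    PLV T ⬝ᵥ ULV 0 = P T ⬝ᵥ U 0 ∧
    P T ⬝ᵥ U 0 = U T (i₀, j₀) :=
  stmt11_general T A ALV U ULV P PLV i₀ j₀ hU hULV hP hPLV hP0 hPLV0 hpayoff hcal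
end
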